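/- arXiv:1010.2232 — 2 statements merged into one kernel-verified Lean document; each statement's English description precedes it below -/
import Mathlib

section
/- Let p ≥ 2 be an integer and let p₁, q₁ be relatively prime positive integers with pq₁ − p₁ > 0. Define s_j(q/p') = ⌊jp'/q⌋_* − ⌊(j−1)p'/q⌋_* where ⌊x⌋_* is the greatest integer strictly less than x. Then for every j with 1 < j < q₁, s_j(q₁/(pq₁−p₁)) = p − s_j(q₁/p₁). -/
/-- `⌊x⌋_*`, the greatest integer strictly smaller than the real number `x`
(equals `⌈x⌉ - 1`). -/
noncomputable def fstar (x : ℝ) : ℤ := ⌈x⌉ - 1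

/-!
Since `p·q₁ − p₁ ≡ −p₁` modulo `q₁`, we have `k(p·q₁ − p₁)/q₁ = k·p − k·p₁/q₁`, and for
`0 < k < q₁` coprimality makes `k·p₁/q₁` a non-integer. For a non-integer `x`,
`⌊n − x⌋_* = n − 1 − ⌊x⌋_*`; applying this at `k = j` and `k = j − 1` and subtracting, the
constants `−1` cancel and `j·p − (j − 1)·p = p` remains.
-/

lemma fstar_intCast_sub {x : ℝ} (hx : x ∉ Set.range Int.cast) (n : ℤ) :
    fstar (n - x) = n - 1 - fstar x := by
  have hceil := (Int.ceil_eq_floor_add_one_iff_notMem x).mpr hx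
  unfold fstar
  rw [show (n : ℝ) - x = -x + n by ring, Int.ceil_add_intCast, Int.ceil_neg]
  omega

lemma intCast_div_notMem_range_intCast {a q : ℤ} (hq : q ≠ 0) (h : ¬ q ∣ a) :
    ((a : ℝ) / q) ∉ Set.range Int.cast := by
  rintro ⟨n, hn⟩
  refine h ⟨n, ?_⟩
  have hq' : (q : ℝ) ≠ 0 := by exact_mod_cast hq
  field_simp at hn
  rw [mul_comm]
  exact_mod_cast hn.symm

lemma IsCoprime.not_dvd_mul_of_pos_of_lt {a q k : ℤ} (hcop : IsCoprime a q) (hk : 0 < k)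
    (hkq : k < q) : ¬ q ∣ k * a := fun h =>
  (Int.le_of_dvd hk (hcop.symm.dvd_of_dvd_mul_right h)).not_gt hkq

lemma fstar_mul_sub_div {p₁ q k : ℤ} (hq : q ≠ 0) (hk : ¬ q ∣ k * p₁) (p : ℤ) :
    fstar ((k : ℝ) * ((p * q - p₁ : ℤ) : ℝ) / q) = k * p - 1 - fstar ((k : ℝ) * p₁ / q) := by
  have hq' : (q : ℝ) ≠ 0 := by exact_mod_cast hq
  have hsplit : (k : ℝ) * ((p * q - p₁ : ℤ) : ℝ) / q
      = ((k * p : ℤ) : ℝ) - ((k * p₁ : ℤ) : ℝ) / q := by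
    push_cast
    field_simp
  rw [hsplit, fstar_intCast_sub (intCast_div_notMem_range_intCast hq hk)]
  push_cast
  rfl

theorem sseq_middle_terms_general (p p₁ q₁ : ℤ)
    (hcop : IsCoprime p₁ q₁) :
    ∀ j : ℤ, 1 < j → j < q₁ →
      fstar ((j : ℝ) * ((p * q₁ - p₁ : ℤ) : ℝ) / (q₁ : ℝ)) -
        fstar (((j : ℝ) - 1) * ((p * q₁ - p₁ : ℤ) : ℝ) / (q₁ : ℝ)) =
      p - (fstar ((j : ℝ) * (p₁ : ℝ) / (q₁ : ℝ)) -
        fstar (((j : ℝ) - 1) * (p₁ : ℝ) / (q₁ : ℝ))) := by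
  intro j hj1 hj2
  have hq₁ : q₁ ≠ 0 := by omega
  have hprev : (j : ℝ) - 1 = ((j - 1 : ℤ) : ℝ) := by push_cast; rfl
  rw [hprev, fstar_mul_sub_div hq₁ (hcop.not_dvd_mul_of_pos_of_lt (by omega) hj2),
    fstar_mul_sub_div hq₁ (hcop.not_dvd_mul_of_pos_of_lt (by omega) (by omega))]
  ring

/-- For `p ≥ 2` and relatively prime positive integers `p₁, q₁` with `p·q₁ − p₁ > 0`,
for every `j` with `1 < j < q₁` we have `s_j(q₁/(p·q₁−p₁)) = p − s_j(q₁/p₁)`,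
where `s_j(q/p') = ⌊j·p'/q⌋_* − ⌊(j−1)·p'/q⌋_*`. -/
theorem sseq_middle_terms (p p₁ q₁ : ℤ) (hp : 2 ≤ p) (hp₁ : 0 < p₁) (hq₁ : 0 < q₁)
    (hcop : IsCoprime p₁ q₁) (hpos : 0 < p * q₁ - p₁) :
    ∀ j : ℤ, 1 < j → j < q₁ →
      fstar ((j : ℝ) * ((p * q₁ - p₁ : ℤ) : ℝ) / (q₁ : ℝ)) -
        fstar (((j : ℝ) - 1) * ((p * q₁ - p₁ : ℤ) : ℝ) / (q₁ : ℝ)) =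
      p - (fstar ((j : ℝ) * (p₁ : ℝ) / (q₁ : ℝ)) -
        fstar (((j : ℝ) - 1) * (p₁ : ℝ) / (q₁ : ℝ))) :=
  sseq_middle_terms_general p p₁ q₁ hcop
end

section
/- Let p ≥ 2 be an integer and let p₁, q₁ be relatively prime positive integers with pq₁ − p₁ > 0 and q₁ ≥ 2. Define s_j(q/p') = ⌊jp'/q⌋_* − ⌊(j−1)p'/q⌋_*. Then s_{q₁}(q₁/(pq₁−p₁)) = p − s_{q₁}(q₁/p₁) − 1. -/
/-! Since `⌈m - x⌉ = m - ⌊x⌋` for an integer `m`, the last term of the S-sequence of slope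
`q/m` is `⌊m/q⌋`. For `q ∤ m` we have `⌊(pq - m)/q⌋ = p - ⌊m/q⌋ - 1`, and coprimality with
`q ≥ 2` rules out `q ∣ p₁`. -/

/-- The term `s_j(q/p')` of the S-sequence of slope `q/p'`. -/
noncomputable def sseqTerm (q p' j : ℤ) : ℤ :=
  fstar (j * p' / q) - fstar ((j - 1) * p' / q)

lemma fstar_intCast_sub_s9 (m : ℤ) (x : ℝ) : fstar (m - x) = m - ⌊x⌋ - 1 := by
  rw [fstar, sub_eq_add_neg (m : ℝ), Int.ceil_intCast_add, Int.ceil_neg]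
  ring

lemma sseqTerm_self (q m : ℤ) (hq : 0 < q) : sseqTerm q m q = m / q := by
  have hq' : (q : ℝ) ≠ 0 := by positivity
  have hlast : (q : ℝ) * m / q = m := by field_simp
  have hprev : ((q : ℝ) - 1) * m / q = m - (m : ℝ) / q := by field_simp
  rw [sseqTerm, hlast, hprev, fstar_intCast_sub_s9, fstar, Int.ceil_intCast,
    Int.floor_div_cast_of_nonneg hq.le, Int.floor_intCast]
  ring

lemma Int.mul_sub_ediv_of_not_dvd {a q : ℤ} (p : ℤ) (hq : 0 < q) (h : ¬q ∣ a) :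
    (p * q - a) / q = p - a / q - 1 := by
  rw [show p * q - a = -a + q * p by ring, Int.add_mul_ediv_left _ _ hq.ne', Int.neg_ediv,
    if_neg h, Int.sign_eq_one_of_pos hq]
  ring

theorem sseq_last_term_general (p p₁ q₁ : ℤ) (hq₁ : 2 ≤ q₁)
    (hcop : IsCoprime p₁ q₁) :
    fstar ((q₁ : ℝ) * ((p * q₁ - p₁ : ℤ) : ℝ) / (q₁ : ℝ)) -
      fstar (((q₁ : ℝ) - 1) * ((p * q₁ - p₁ : ℤ) : ℝ) / (q₁ : ℝ)) =
    p - (fstar ((q₁ : ℝ) * (p₁ : ℝ) / (q₁ : ℝ)) -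
      fstar (((q₁ : ℝ) - 1) * (p₁ : ℝ) / (q₁ : ℝ))) - 1 := by
  have hq : 0 < q₁ := by omega
  have hndvd : ¬q₁ ∣ p₁ := fun hdvd => by
    rcases Int.isUnit_iff.mp (hcop.isUnit_of_dvd' hdvd dvd_rfl) with h | h <;> omega
  change sseqTerm q₁ (p * q₁ - p₁) q₁ = p - sseqTerm q₁ p₁ q₁ - 1
  rw [sseqTerm_self _ _ hq, sseqTerm_self _ _ hq, Int.mul_sub_ediv_of_not_dvd p hq hndvd]

/-- For `p ≥ 2` and relatively prime positive integers `p₁, q₁` with `p·q₁ − p₁ > 0`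
and `q₁ ≥ 2`, we have `s_{q₁}(q₁/(p·q₁−p₁)) = p − s_{q₁}(q₁/p₁) − 1`,
where `s_j(q/p') = ⌊j·p'/q⌋_* − ⌊(j−1)·p'/q⌋_*`. -/
theorem sseq_last_term (p p₁ q₁ : ℤ) (hp : 2 ≤ p) (hp₁ : 0 < p₁) (hq₁ : 2 ≤ q₁)
    (hcop : IsCoprime p₁ q₁) (hpos : 0 < p * q₁ - p₁) :
    fstar ((q₁ : ℝ) * ((p * q₁ - p₁ : ℤ) : ℝ) / (q₁ : ℝ)) -
      fstar (((q₁ : ℝ) - 1) * ((p * q₁ - p₁ : ℤ) : ℝ) / (q₁ : ℝ)) =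
    p - (fstar ((q₁ : ℝ) * (p₁ : ℝ) / (q₁ : ℝ)) -
      fstar (((q₁ : ℝ) - 1) * (p₁ : ℝ) / (q₁ : ℝ))) - 1 :=
  sseq_last_term_general p p₁ q₁ hq₁ hcop
end
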